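/- The function f : ℕ → ℕ defined by f(0) = f(1) = 0 and f(k) = 2(k−1) + 2·∑_{i=0}^{k−2} f(i) for k ≥ 2 satisfies the closed form: f(k) = (2/3)(2^k − 1) if k is even and positive, and f(k) = (2/3)(2^k − 2) if k is odd. -/

import Mathlib

/-!
Subtracting consecutive instances of the recursion gives the linear recurrence
`f(k+3) = f(k+2) + 2 f(k+1) + 2`, i.e. `f(k+1) + f(k) + 2` doubles at each step, so
`f(k) + f(k+1) + 2 = 2^(k+1)`. Solving this first-order recurrence yields
`3 f(k) + 3 = 2^(k+1) + (-1)^k`, which is the closed form in both parities.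
-/

def addedEdges : ℕ → ℕ
  | 0 => 0
  | 1 => 0
  | k + 2 => 2 * (k + 1) + 2 * ∑ i ∈ (Finset.range (k + 1)).attach,
      addedEdges i.1
  decreasing_by
    have h := Finset.mem_range.mp i.2
    omega

open Finset

lemma addedEdges_add_two (k : ℕ) :
    addedEdges (k + 2) = 2 * (k + 1) + 2 * ∑ i ∈ range (k + 1), addedEdges i := by
  rw [addedEdges, sum_attach (range (k + 1)) addedEdges]

lemma addedEdges_add_three (k : ℕ) :
    addedEdges (k + 3) = addedEdges (k + 2) + 2 * addedEdges (k + 1) + 2 := by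
  rw [addedEdges_add_two (k + 1), addedEdges_add_two, sum_range_succ]
  ring

lemma addedEdges_add_addedEdges_succ (k : ℕ) :
    addedEdges k + addedEdges (k + 1) + 2 = 2 ^ (k + 1) := by
  induction k with
  | zero => simp [addedEdges]
  | succ k ih =>
    rcases k with _ | k
    · simp [addedEdges_add_two, addedEdges]
    · rw [addedEdges_add_three, pow_succ, ← ih]
      ring

lemma three_mul_addedEdges_add_three (k : ℕ) :
    (3 * addedEdges k + 3 : ℤ) = 2 ^ (k + 1) + (-1) ^ k := by
  induction k with
  | zero => simp [addedEdges]
  | succ k ih =>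
    have hpair : (addedEdges k + addedEdges (k + 1) + 2 : ℤ) = 2 ^ (k + 1) := by
      exact_mod_cast addedEdges_add_addedEdges_succ k
    linear_combination 3 * hpair - ih

theorem addedEdges_closed_form (k : ℕ) :
    (Even k ∧ 0 < k → 3 * addedEdges k = 2 * (2 ^ k - 1)) ∧
    (Odd k → 3 * addedEdges k = 2 * (2 ^ k - 2)) := by
  have h := three_mul_addedEdges_add_three k
  rw [pow_succ] at h
  constructor
  · rintro ⟨hk, -⟩
    have : 1 ≤ 2 ^ k := Nat.one_le_two_pow
    rw [hk.neg_one_pow] at h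
    zify [this]
    linarith
  · intro hk
    have : 2 ≤ 2 ^ k := Nat.le_self_pow hk.pos.ne' 2
    rw [hk.neg_one_pow] at h
    zify [this]
    linarith
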